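/- arXiv:1504.04231 — 3 statements merged into one kernel-verified Lean document; each statement's English description precedes it below -/
import Mathlib

section
/- Let γ > 1, ν ∈ (0,1), and constants C₁ > 0, C₃ > 0, ζ > 0 satisfy ν/(1-ν) > 4γ²/(ζC₁). Suppose α, β ∈ (0,1] satisfy (αβ - 1/2)/((1-α)(1-β)) ≥ C₃/C₁. Then for any real numbers g ≥ ζδ with δ > 0, the convex combination αβ·b₂ + (α(1-β)+(1-α)β)·b₁ + (1-α)(1-β)·b₃ is at most -(1/4)C₁·ν·g·δ, where b₁ = (1-ν)(1/γ² - 1)δ², b₂ = -νC₁gδ + (1-ν)(γ²-1)δ², and b₃ = νC₃gδ + (1-ν)(γ²-1)δ². -/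
set_option maxHeartbeats 1000000 in
theorem stmt8 (γ ν C₁ C₃ ζ α β g δ : ℝ)
    (hγ : 1 < γ) (hν : ν ∈ Set.Ioo (0:ℝ) 1) (hC₁ : 0 < C₁) (hC₃ : 0 < C₃) (hζ : 0 < ζ)
    (hνlarge : ν / (1 - ν) > 4 * γ ^ 2 / (ζ * C₁))
    (hα : α ∈ Set.Ioc (0:ℝ) 1) (hβ : β ∈ Set.Ioc (0:ℝ) 1)
    (hαβ : (α * β - 1 / 2) / ((1 - α) * (1 - β)) ≥ C₃ / C₁)
    (hδ : 0 < δ) (hg : ζ * δ ≤ g) :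
    α * β * (-(ν * C₁ * g * δ) + (1 - ν) * (γ ^ 2 - 1) * δ ^ 2) +
        (α * (1 - β) + (1 - α) * β) * ((1 - ν) * (1 / γ ^ 2 - 1) * δ ^ 2) +
        (1 - α) * (1 - β) * (ν * C₃ * g * δ + (1 - ν) * (γ ^ 2 - 1) * δ ^ 2) ≤
      -(1 / 4) * C₁ * ν * g * δ := by
  obtain ⟨hν0, hν1⟩ := hν
  obtain ⟨hα0, hα1⟩ := hα
  obtain ⟨hβ0, hβ1⟩ := hβ
  have hγ0 : (0:ℝ) < γ := by linarith
  have hg0 : 0 < g := lt_of_lt_of_le (by positivity) hg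
  have hrnn : 0 ≤ (1 - α) * (1 - β) := mul_nonneg (by linarith) (by linarith)
  have hr : 0 < (1 - α) * (1 - β) := by
    rcases hrnn.lt_or_eq with h | h
    · exact h
    · exfalso
      rw [← h, div_zero] at hαβ
      have := div_pos hC₃ hC₁
      linarith
  have key : C₃ * ((1 - α) * (1 - β)) ≤ (α * β - 1 / 2) * C₁ :=
    (div_le_div_iff₀ hC₁ hr).mp hαβ
  have hνl : 4 * γ ^ 2 * (1 - ν) < ν * (ζ * C₁) :=
    (div_lt_div_iff₀ (by positivity) (by linarith)).mp hνlarge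
  -- h1
  have h1 : ((1 - α) * (1 - β)) * (ν * C₃ * g * δ) ≤ (α * β - 1 / 2) * (ν * C₁ * g * δ) := by
    have := mul_le_mul_of_nonneg_right key (show (0:ℝ) ≤ ν * g * δ by positivity)
    nlinarith [this]
  -- h2
  have hX : 0 ≤ (1 - ν) * (γ ^ 2 - 1) * δ ^ 2 :=
    mul_nonneg (mul_nonneg (by linarith) (by nlinarith)) (sq_nonneg δ)
  have hpr : α * β + (1 - α) * (1 - β) ≤ 1 := by nlinarith
  have h2 : (α * β + (1 - α) * (1 - β)) * ((1 - ν) * (γ ^ 2 - 1) * δ ^ 2)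
      ≤ (1 - ν) * (γ ^ 2 - 1) * δ ^ 2 := by
    nlinarith [mul_le_mul_of_nonneg_right hpr hX]
  -- h3
  have h3 : (1 - ν) * (γ ^ 2 - 1) * δ ^ 2 ≤ ν * C₁ * g * δ / 4 := by
    have ha := mul_lt_mul_of_pos_right hνl (mul_pos hδ hδ)
    have hb := mul_le_mul_of_nonneg_left hg (show (0:ℝ) ≤ ν * C₁ * δ by positivity)
    nlinarith [mul_nonneg (show (0:ℝ) ≤ 1 - ν by linarith) (sq_nonneg δ)]
  -- h4
  have h1γ : 1 / γ ^ 2 - 1 ≤ 0 := by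
    rw [sub_nonpos, div_le_one (by positivity)]
    exact one_le_pow₀ hγ.le
  have h4 : (α * (1 - β) + (1 - α) * β) * ((1 - ν) * (1 / γ ^ 2 - 1) * δ ^ 2) ≤ 0 := by
    apply mul_nonpos_of_nonneg_of_nonpos
    · exact add_nonneg (mul_nonneg hα0.le (by linarith)) (mul_nonneg (by linarith) hβ0.le)
    · exact mul_nonpos_of_nonpos_of_nonneg
        (mul_nonpos_of_nonneg_of_nonpos (by linarith) h1γ) (sq_nonneg δ)
  linarith [h1, h2, h3, h4]
end

section
/- Let m(x) = f̄ + ḡᵀ(x - x⁰) be a linear model on B(x⁰, δ) where |f̄ - f(x⁰)| ≤ κ_ef·δ²/2 and ‖ḡ - ∇f(x⁰)‖ ≤ κ_eg·δ/2, and suppose ∇f is L-Lipschitz. Then there exist constants κ'_ef, κ'_eg depending only on κ_ef, κ_eg, L such that m is (κ'_ef, κ'_eg)-fully linear of f on B(x⁰, δ): specifically, for all y ∈ B(x⁰, δ), ‖∇f(y) - ∇m(y)‖ ≤ (κ_eg/2 + L)δ and |f(y) - m(y)| ≤ (κ_ef/2 + κ_eg/2 + 3L/2)δ². -/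
/-!
The gradient error at `y` is at most the Lipschitz increment `‖g y - g x0‖ ≤ Lδ` plus the error
`κeg δ / 2` at `x0`. For the values, the error of the model splits into the first-order Taylor
remainder of `f` at `x0`, which the mean value inequality bounds by `Lδ²` since the gradient varies
by at most `Lδ` on the ball, plus `|fbar - f x0|` and `⟪g x0 - gbar, y - x0⟫`.
-/

open Metric

open scoped RealInnerProductSpace

theorem LipschitzOnWith.norm_sub_le_mul_radius {X F : Type*} [PseudoMetricSpace X]
    [SeminormedAddCommGroup F] {g : X → F} {L : NNReal} {x y : X} {r : ℝ}
    (hL : LipschitzOnWith L g (closedBall x r)) (hy : y ∈ closedBall x r) :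
    ‖g y - g x‖ ≤ L * r := by
  have hr : 0 ≤ r := dist_nonneg.trans hy
  rw [← dist_eq_norm]
  calc dist (g y) (g x) ≤ L * dist y x := hL.dist_le_mul y hy x (mem_closedBall_self hr)
    _ ≤ L * r := by gcongr; exact hy

section LinearModel

variable {E : Type*} [NormedAddCommGroup E] [InnerProductSpace ℝ E]

theorem Convex.abs_sub_sub_inner_le_of_hasGradientAt [CompleteSpace E] {f : E → ℝ} {g : E → E}
    {s : Set E} {x y : E} {C : ℝ} (hs : Convex ℝ s) (hf : ∀ z ∈ s, HasGradientAt f (g z) z)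
    (hC : ∀ z ∈ s, ‖g z - g x‖ ≤ C) (hx : x ∈ s) (hy : y ∈ s) :
    |f y - f x - ⟪g x, y - x⟫| ≤ C * ‖y - x‖ := by
  have hmvt := hs.norm_image_sub_le_of_norm_hasFDerivWithin_le'
    (f' := fun z => InnerProductSpace.toDual ℝ E (g z))
    (fun z hz => (hf z hz).hasFDerivAt.hasFDerivWithinAt)
    (fun z hz => by rw [← map_sub, LinearIsometryEquiv.norm_map]; exact hC z hz) hx hy
  simpa only [InnerProductSpace.toDual_apply_apply, Real.norm_eq_abs] using hmvt

theorem abs_sub_sub_inner_le_of_lipschitzOnWith_gradient [CompleteSpace E] {f : E → ℝ}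
    {g : E → E} {L : NNReal} {x y : E} {r : ℝ}
    (hf : ∀ z ∈ closedBall x r, HasGradientAt f (g z) z)
    (hL : LipschitzOnWith L g (closedBall x r)) (hy : y ∈ closedBall x r) :
    |f y - f x - ⟪g x, y - x⟫| ≤ L * r ^ 2 := by
  have hr : 0 ≤ r := dist_nonneg.trans hy
  calc |f y - f x - ⟪g x, y - x⟫| ≤ L * r * ‖y - x‖ :=
        (convex_closedBall x r).abs_sub_sub_inner_le_of_hasGradientAt hf
          (fun z hz => hL.norm_sub_le_mul_radius hz) (mem_closedBall_self hr) hy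
    _ ≤ L * r * r := by gcongr; exact mem_closedBall_iff_norm.mp hy
    _ = L * r ^ 2 := by ring

theorem abs_sub_linear_model_le (f : E → ℝ) (g : E → E) (x y gbar : E) (fbar : ℝ) :
    |f y - (fbar + ⟪gbar, y - x⟫)| ≤
      |f y - f x - ⟪g x, y - x⟫| + |f x - fbar| + ‖g x - gbar‖ * ‖y - x‖ := by
  have hsplit : f y - (fbar + ⟪gbar, y - x⟫) =
      (f y - f x - ⟪g x, y - x⟫) + (f x - fbar) + ⟪g x - gbar, y - x⟫ := by
    rw [inner_sub_left]; ring
  rw [hsplit]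
  exact (abs_add_le _ _).trans
    (add_le_add (abs_add_le _ _) (abs_real_inner_le_norm _ _))

end LinearModel

theorem stmt15_general {n : ℕ} (f : EuclideanSpace ℝ (Fin n) → ℝ)
    (g : EuclideanSpace ℝ (Fin n) → EuclideanSpace ℝ (Fin n))
    (x0 gbar : EuclideanSpace ℝ (Fin n)) (fbar δ κef κeg : ℝ) (L : NNReal)
    (m : EuclideanSpace ℝ (Fin n) → ℝ)
    (hm : ∀ y, m y = fbar + (inner ℝ gbar (y - x0) : ℝ))
    (hf : ∀ y ∈ closedBall x0 δ, HasGradientAt f (g y) y)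
    (hL : LipschitzOnWith L g (closedBall x0 δ))
    (hfbar : |fbar - f x0| ≤ κef * δ ^ 2 / 2)
    (hgbar : ‖gbar - g x0‖ ≤ κeg * δ / 2) :
    ∀ y ∈ closedBall x0 δ,
      ‖g y - gbar‖ ≤ (κeg / 2 + L) * δ ∧
        |f y - m y| ≤ (κef / 2 + κeg / 2 + 3 * L / 2) * δ ^ 2 := by
  intro y hy
  rw [abs_sub_comm] at hfbar
  rw [norm_sub_rev] at hgbar
  have hyx0 : ‖y - x0‖ ≤ δ := mem_closedBall_iff_norm.mp hy
  constructor
  · calc ‖g y - gbar‖ ≤ ‖g y - g x0‖ + ‖g x0 - gbar‖ := norm_sub_le_norm_sub_add_norm_sub _ _ _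
      _ ≤ L * δ + κeg * δ / 2 := add_le_add (hL.norm_sub_le_mul_radius hy) hgbar
      _ = (κeg / 2 + L) * δ := by ring
  · have hLδ : 0 ≤ (L : ℝ) * δ ^ 2 := by positivity
    calc |f y - m y|
        ≤ |f y - f x0 - ⟪g x0, y - x0⟫| + |f x0 - fbar| + ‖g x0 - gbar‖ * ‖y - x0‖ := by
          rw [hm]; exact abs_sub_linear_model_le f g x0 y gbar fbar
      _ ≤ L * δ ^ 2 + κef * δ ^ 2 / 2 + κeg * δ / 2 * δ := by
          gcongr
          · exact abs_sub_sub_inner_le_of_lipschitzOnWith_gradient hf hL hy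
          · exact (norm_nonneg _).trans hgbar
      _ ≤ (κef / 2 + κeg / 2 + 3 * L / 2) * δ ^ 2 := by linarith

theorem stmt15 {n : ℕ} (f : EuclideanSpace ℝ (Fin n) → ℝ)
    (g : EuclideanSpace ℝ (Fin n) → EuclideanSpace ℝ (Fin n))
    (x0 gbar : EuclideanSpace ℝ (Fin n)) (fbar δ κef κeg : ℝ) (L : NNReal)
    (hδ : 0 < δ)
    (m : EuclideanSpace ℝ (Fin n) → ℝ)
    (hm : ∀ y, m y = fbar + (inner ℝ gbar (y - x0) : ℝ))
    (hf : ∀ y ∈ closedBall x0 δ, HasGradientAt f (g y) y)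
    (hL : LipschitzOnWith L g (closedBall x0 δ))
    (hfbar : |fbar - f x0| ≤ κef * δ ^ 2 / 2)
    (hgbar : ‖gbar - g x0‖ ≤ κeg * δ / 2) :
    ∀ y ∈ closedBall x0 δ,
      ‖g y - gbar‖ ≤ (κeg / 2 + L) * δ ∧
        |f y - m y| ≤ (κef / 2 + κeg / 2 + 3 * L / 2) * δ ^ 2 :=
  stmt15_general f g x0 gbar fbar δ κef κeg L m hm hf hL hfbar hgbar
end

section
/- Let f be bounded below with L-Lipschitz gradient, and consider the potential Φ_k = νf(X_k) + (1-ν)Δ_k² with ν ∈ (0,1). Fix ε > 0 and ζ > 0 and suppose on every iteration k with ‖∇f(X_k)‖ ≥ ζΔ_k it holds that E[Φ_{k+1} - Φ_k | F_{k-1}] ≤ -(1/4)C₁ν‖∇f(X_k)‖Δ_k, while on all other iterations E[Φ_{k+1} - Φ_k | F_{k-1}] ≤ 0. If almost surely Δ_k → 0, then almost surely ∑_{k : ‖∇f(X_k)‖ > ε} Δ_k < ∞. -/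
open MeasureTheory Filter

theorem stmt16 {n : ℕ} {Ω : Type*} {m0 : MeasurableSpace Ω} {μ : Measure Ω}
    [IsProbabilityMeasure μ] (ℱ : Filtration ℕ m0)
    (f : EuclideanSpace ℝ (Fin n) → ℝ) (fmin : ℝ) (hfbdd : ∀ x, fmin ≤ f x)
    (L : NNReal) (hL : LipschitzWith L (gradient f))
    (X : ℕ → Ω → EuclideanSpace ℝ (Fin n)) (Δ : ℕ → Ω → ℝ)
    (hΔnonneg : ∀ k ω, 0 ≤ Δ k ω)
    (ν C₁ ζ ε : ℝ) (hν : ν ∈ Set.Ioo (0:ℝ) 1) (hC₁ : 0 < C₁) (hζ : 0 < ζ) (hε : 0 < ε)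
    (Φ : ℕ → Ω → ℝ)
    (hΦ : ∀ k ω, Φ k ω = ν * f (X k ω) + (1 - ν) * (Δ k ω) ^ 2)
    (hint : ∀ k, Integrable (Φ k) μ)
    (hdec1 : ∀ k, ∀ᵐ ω ∂μ, ζ * Δ k ω ≤ ‖gradient f (X k ω)‖ →
      (μ[Φ (k + 1) - Φ k|ℱ k]) ω ≤ -(1 / 4) * C₁ * ν * ‖gradient f (X k ω)‖ * Δ k ω)
    (hdec2 : ∀ k, ∀ᵐ ω ∂μ, ‖gradient f (X k ω)‖ < ζ * Δ k ω →
      (μ[Φ (k + 1) - Φ k|ℱ k]) ω ≤ 0)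
    (hΔ0 : ∀ᵐ ω ∂μ, Tendsto (fun k => Δ k ω) atTop (nhds 0)) :
    ∀ᵐ ω ∂μ, Summable (fun k => if ε < ‖gradient f (X k ω)‖ then Δ k ω else 0) := by
  obtain ⟨hν0, hν1⟩ := hν
  set c : ℝ := (1 / 4) * C₁ * ν with hc_def
  have hc : 0 < c := by positivity
  set D : ℕ → Ω → ℝ := fun k => μ[Φ (k + 1) - Φ k|ℱ k] with hD
  have hDint : ∀ k, Integrable (D k) μ := fun k => integrable_condExp
  set g : ℕ → Ω → ℝ := fun k ω =>
    if ζ * Δ k ω ≤ ‖gradient f (X k ω)‖ then ‖gradient f (X k ω)‖ * Δ k ω else 0 with hg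
  have hgnonneg : ∀ k ω, 0 ≤ g k ω := by
    intro k ω
    simp only [hg]
    split
    · exact mul_nonneg (norm_nonneg _) (hΔnonneg _ _)
    · exact le_rfl
  -- key pointwise bound
  have hkey : ∀ k, ∀ᵐ ω ∂μ, c * g k ω ≤ -(D k ω) := by
    intro k
    filter_upwards [hdec1 k, hdec2 k] with ω h1 h2
    by_cases hcond : ζ * Δ k ω ≤ ‖gradient f (X k ω)‖
    · have h := h1 hcond
      simp only [hg, if_pos hcond]
      have heq : -(1 / 4) * C₁ * ν * ‖gradient f (X k ω)‖ * Δ k ω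
          = -(c * (‖gradient f (X k ω)‖ * Δ k ω)) := by rw [hc_def]; ring
      linarith [h, heq.le, heq.ge]
    · have h := h2 (lt_of_not_ge hcond)
      simp only [hg, if_neg hcond]
      simpa using neg_nonneg.mpr h
  have hDneg : ∀ k, ∀ᵐ ω ∂μ, 0 ≤ -(D k ω) := by
    intro k
    filter_upwards [hkey k] with ω h
    exact le_trans (mul_nonneg hc.le (hgnonneg k ω)) h
  -- integrals of -(D k)
  have hintD : ∀ k, ∫ ω, -(D k ω) ∂μ = (∫ ω, Φ k ω ∂μ) - ∫ ω, Φ (k + 1) ω ∂μ := by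
    intro k
    rw [integral_neg]
    have h1 : ∫ ω, D k ω ∂μ = ∫ ω, (Φ (k + 1) - Φ k) ω ∂μ :=
      integral_condExp (ℱ.le k)
    have h2 : ∫ ω, (Φ (k + 1) - Φ k) ω ∂μ
        = (∫ ω, Φ (k + 1) ω ∂μ) - ∫ ω, Φ k ω ∂μ := by
      simpa using integral_sub (hint (k + 1)) (hint k)
    rw [h1, h2]; ring
  -- lower bound on ∫ Φ N
  have hΦlb : ∀ N, ν * fmin ≤ ∫ ω, Φ N ω ∂μ := by
    intro N
    have hpt : ∀ ω, ν * fmin ≤ Φ N ω := by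
      intro ω
      rw [hΦ]
      nlinarith [hfbdd (X N ω), sq_nonneg (Δ N ω), hΔnonneg N ω]
    calc ν * fmin = ∫ _ : Ω, ν * fmin ∂μ := by simp
    _ ≤ ∫ ω, Φ N ω ∂μ := integral_mono (integrable_const _) (hint N) hpt
  set B : ℝ := (∫ ω, Φ 0 ω ∂μ) - ν * fmin with hB
  have hpartial : ∀ N : ℕ, ∑ k ∈ Finset.range N, ∫ ω, -(D k ω) ∂μ ≤ B := by
    intro N
    have : ∑ k ∈ Finset.range N, ∫ ω, -(D k ω) ∂μ
        = (∫ ω, Φ 0 ω ∂μ) - ∫ ω, Φ N ω ∂μ := by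
      calc ∑ k ∈ Finset.range N, ∫ ω, -(D k ω) ∂μ
          = ∑ k ∈ Finset.range N, ((∫ ω, Φ k ω ∂μ) - ∫ ω, Φ (k + 1) ω ∂μ) :=
            Finset.sum_congr rfl fun k _ => hintD k
        _ = (∫ ω, Φ 0 ω ∂μ) - ∫ ω, Φ N ω ∂μ := Finset.sum_range_sub' _ _
    rw [this, hB]
    linarith [hΦlb N]
  -- pass to lintegrals
  set H : ℕ → Ω → ENNReal := fun k ω => ENNReal.ofReal (-(D k ω)) with hH
  have hHmeas : ∀ k, AEMeasurable (H k) μ := fun k =>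
    ((hDint k).neg.aestronglyMeasurable.aemeasurable).ennreal_ofReal
  have hHint : ∀ k, ∫⁻ ω, H k ω ∂μ = ENNReal.ofReal (∫ ω, -(D k ω) ∂μ) := by
    intro k
    exact (ofReal_integral_eq_lintegral_ofReal (hDint k).neg (hDneg k)).symm
  have hintDnn : ∀ k, 0 ≤ ∫ ω, -(D k ω) ∂μ := fun k =>
    integral_nonneg_of_ae (hDneg k)
  have htsum : ∑' k, ∫⁻ ω, H k ω ∂μ ≤ ENNReal.ofReal B := by
    refine Summable.tsum_le_of_sum_le ENNReal.summable ?_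
    intro s
    obtain ⟨N, hN⟩ := s.exists_nat_subset_range
    calc ∑ k ∈ s, ∫⁻ ω, H k ω ∂μ
        ≤ ∑ k ∈ Finset.range N, ∫⁻ ω, H k ω ∂μ :=
          Finset.sum_le_sum_of_subset hN
      _ = ENNReal.ofReal (∑ k ∈ Finset.range N, ∫ ω, -(D k ω) ∂μ) := by
          rw [ENNReal.ofReal_sum_of_nonneg fun k _ => hintDnn k]
          exact Finset.sum_congr rfl fun k _ => hHint k
      _ ≤ ENNReal.ofReal B := ENNReal.ofReal_le_ofReal (hpartial N)
  have hlint : ∫⁻ ω, ∑' k, H k ω ∂μ ≠ ⊤ := by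
    rw [lintegral_tsum hHmeas]
    exact lt_of_le_of_lt htsum ENNReal.ofReal_lt_top |>.ne
  have hae_fin : ∀ᵐ ω ∂μ, ∑' k, H k ω < ⊤ :=
    ae_lt_top' (AEMeasurable.ennreal_tsum hHmeas) hlint
  have hae_nn : ∀ᵐ ω ∂μ, ∀ k, 0 ≤ -(D k ω) := ae_all_iff.mpr hDneg
  have hae_key : ∀ᵐ ω ∂μ, ∀ k, c * g k ω ≤ -(D k ω) := ae_all_iff.mpr hkey
  -- a.e. summability of g
  have hgsum : ∀ᵐ ω ∂μ, Summable (fun k => g k ω) := by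
    filter_upwards [hae_fin, hae_nn, hae_key] with ω hfin hnn hk
    have hsumD : Summable (fun k => -(D k ω)) := by
      have h1 : Summable (fun k => (H k ω).toReal) :=
        ENNReal.summable_toReal hfin.ne
      have h2 : (fun k => (H k ω).toReal) = fun k => -(D k ω) := by
        funext k
        exact ENNReal.toReal_ofReal (hnn k)
      rwa [h2] at h1
    have : Summable (fun k => (1 / c) * -(D k ω)) := hsumD.mul_left _
    refine this.of_nonneg_of_le (fun k => hgnonneg k ω) fun k => ?_
    have h := mul_le_mul_of_nonneg_left (hk k) (by positivity : (0:ℝ) ≤ 1 / c)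
    calc g k ω = 1 / c * (c * g k ω) := by field_simp
      _ ≤ 1 / c * -D k ω := h
  -- conclude
  filter_upwards [hgsum, hΔ0] with ω hsum htend
  have hev : ∀ᶠ k in atTop, Δ k ω < ε / ζ :=
    htend.eventually (gt_mem_nhds (by positivity))
  obtain ⟨N, hN⟩ := eventually_atTop.mp hev
  rw [← summable_nat_add_iff N]
  have hb : Summable (fun k => (1 / ε) * g (k + N) ω) :=
    (((summable_nat_add_iff N).mpr hsum)).mul_left _
  refine hb.of_nonneg_of_le (fun k => ?_) fun k => ?_
  · split
    · exact hΔnonneg _ _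
    · exact le_rfl
  · by_cases hcond : ε < ‖gradient f (X (k + N) ω)‖
    · rw [if_pos hcond]
      have h1 : ζ * Δ (k + N) ω < ε := by
        have := hN (k + N) (Nat.le_add_left N k)
        calc ζ * Δ (k + N) ω < ζ * (ε / ζ) := by
              exact mul_lt_mul_of_pos_left this hζ
          _ = ε := by field_simp
      have h2 : ζ * Δ (k + N) ω ≤ ‖gradient f (X (k + N) ω)‖ :=
        le_of_lt (h1.trans hcond)
      simp only [hg, if_pos h2]
      have h3 : ε * Δ (k + N) ω ≤ ‖gradient f (X (k + N) ω)‖ * Δ (k + N) ω :=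
        mul_le_mul_of_nonneg_right hcond.le (hΔnonneg _ _)
      calc Δ (k + N) ω = 1 / ε * (ε * Δ (k + N) ω) := by field_simp
        _ ≤ 1 / ε * (‖gradient f (X (k + N) ω)‖ * Δ (k + N) ω) :=
          mul_le_mul_of_nonneg_left h3 (by positivity)
    · rw [if_neg hcond]
      exact mul_nonneg (by positivity) (hgnonneg _ _)
end
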